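/- arXiv:1106.5907 — 4 statements merged into one kernel-verified Lean document; each statement's English description precedes it below -/
import Mathlib

section
/- Let (S,X) be a finite graph with vertex set S and edge set X, and let q, r be natural numbers. The number of colorings σ : S → {1, …, q+r} such that for every edge {i,j} ∈ X one has σ_i = σ_j and σ_i ≤ q (i.e., both endpoints carry the same visible color) equals (q+r)^{κ₀(S,X)} · q^{κ₁(S,X)}, where κ₀(S,X) is the number of isolated vertices of (S,X) and κ₁(S,X) is the number of connected components of (S,X) containing at least two vertices. -/
open Classical

noncomputable section

/-- Number of isolated vertices (singleton connected components) of the graph `(S, X)`. -/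
def kappa0 {S : Type*} [Fintype S] (X : Finset (Sym2 S)) : ℕ :=
  Nat.card {v : S // ∀ w, ¬ (SimpleGraph.fromEdgeSet (X : Set (Sym2 S))).Adj v w}

/-- Number of connected components of the graph `(S, X)` containing at least two vertices. -/
def kappa1 {S : Type*} [Fintype S] (X : Finset (Sym2 S)) : ℕ :=
  Nat.card {c : (SimpleGraph.fromEdgeSet (X : Set (Sym2 S))).ConnectedComponent //
    1 < Nat.card {v : S //
      (SimpleGraph.fromEdgeSet (X : Set (Sym2 S))).connectedComponentMk v = c}}

/-- The edge `e` is "good" for the colouring `σ`: both its endpoints carry the same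
visible colour (a colour among the first `q` ones). -/
def goodEdge {S : Type*} {n : ℕ} (q : ℕ) (σ : S → Fin n) (e : Sym2 S) : Prop :=
  ∀ i ∈ e, ∀ j ∈ e, σ i = σ j ∧ (σ i : ℕ) < q

section Aux
variable {S : Type*} {G : SimpleGraph S}

lemma constant_on_reachable {n : ℕ} (σ : S → Fin n)
    (h : ∀ v w, G.Adj v w → σ v = σ w) {v w : S} (hr : G.Reachable v w) :
    σ v = σ w := by
  obtain ⟨p⟩ := hr
  induction p with
  | nil => rfl
  | cons hadj _ ih => exact (h _ _ hadj).trans ih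

lemma big_of_adj [Finite S] {v w : S} (hadj : G.Adj v w) :
    1 < Nat.card {u : S // G.connectedComponentMk u = G.connectedComponentMk v} := by
  rw [Finite.one_lt_card_iff_nontrivial]
  exact ⟨⟨⟨v, rfl⟩, ⟨w, SimpleGraph.ConnectedComponent.sound hadj.symm.reachable⟩,
    by simp [hadj.ne]⟩⟩

lemma adj_of_big [Finite S] {v : S}
    (h : 1 < Nat.card {u : S // G.connectedComponentMk u = G.connectedComponentMk v}) :
    ∃ w, G.Adj v w := by
  rw [Finite.one_lt_card_iff_nontrivial] at h
  obtain ⟨⟨u, hcomp⟩, hu⟩ := exists_ne (⟨v, rfl⟩ : {u : S // G.connectedComponentMk u = G.connectedComponentMk v})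
  have hne : u ≠ v := fun h' => hu (Subtype.ext h')
  have hr : G.Reachable v u := (SimpleGraph.ConnectedComponent.exact hcomp).symm
  obtain ⟨p⟩ := hr
  cases p with
  | nil => exact absurd rfl hne.symm
  | cons hadj _ => exact ⟨_, hadj⟩

lemma mk_out_eq (c : G.ConnectedComponent) : G.connectedComponentMk (Quot.out c) = c :=
  Quot.out_eq c

end Aux

/-- The number of colourings of `S` with `q` visible and `r` invisible colours such that
every edge of `X` has both endpoints of the same visible colour equals
`(q+r)^{κ₀(S,X)} · q^{κ₁(S,X)}`. -/
theorem statement0 {S : Type*} [Fintype S] [DecidableEq S] (q r : ℕ)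
    (X : Finset (Sym2 S)) (hX : ∀ e ∈ X, ¬ e.IsDiag) :
    Nat.card {σ : S → Fin (q + r) // ∀ e ∈ X, goodEdge q σ e}
      = (q + r) ^ kappa0 X * q ^ kappa1 X := by
  classical
  set G := SimpleGraph.fromEdgeSet (X : Set (Sym2 S)) with hG
  -- reformulate the predicate in terms of adjacency
  have key : ∀ σ : S → Fin (q + r), (∀ e ∈ X, goodEdge q σ e) ↔
      (∀ v w, G.Adj v w → σ v = σ w ∧ (σ v : ℕ) < q) := by
    intro σ
    constructor
    · intro hσ v w hadj
      rw [hG, SimpleGraph.fromEdgeSet_adj] at hadj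
      exact hσ _ hadj.1 v (by simp) w (by simp)
    · intro h e he
      induction e using Sym2.ind with
      | _ a b =>
        have hne : a ≠ b := by
          intro hab; exact hX _ he (by simp [hab])
        have hadj : G.Adj a b := by
          rw [hG, SimpleGraph.fromEdgeSet_adj]; exact ⟨he, hne⟩
        obtain ⟨hab, haq⟩ := h a b hadj
        obtain ⟨_, hbq⟩ := h b a hadj.symm
        intro i hi j hj
        rw [Sym2.mem_iff] at hi hj
        rcases hi with rfl | rfl <;> rcases hj with rfl | rfl <;>
          exact ⟨by first | rfl | exact hab | exact hab.symm, by assumption⟩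
  -- equivalence with pairs of colourings
  have keq : ∀ (σ : S → Fin (q + r)) (hσ : ∀ e ∈ X, goodEdge q σ e)
      (c : G.ConnectedComponent)
      (hc : 1 < Nat.card {v : S // G.connectedComponentMk v = c}),
      (σ (Quot.out c) : ℕ) < q := by
    intro σ hσ c hc
    have hc' : 1 < Nat.card {v : S //
        G.connectedComponentMk v = G.connectedComponentMk (Quot.out c)} := by
      rwa [mk_out_eq]
    obtain ⟨w, hw⟩ := adj_of_big hc'
    exact ((key σ).mp hσ _ _ hw).2
  have e : {σ : S → Fin (q + r) // ∀ e ∈ X, goodEdge q σ e} ≃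
      ({v : S // ∀ w, ¬ G.Adj v w} → Fin (q + r)) ×
      ({c : G.ConnectedComponent //
        1 < Nat.card {v : S // G.connectedComponentMk v = c}} → Fin q) := by
    refine
      { toFun := fun σ =>
          ⟨fun v => σ.1 v.1, fun c => ⟨(σ.1 (Quot.out c.1) : ℕ), keq σ.1 σ.2 c.1 c.2⟩⟩
        invFun := fun fg =>
          ⟨fun v => if h : ∀ w, ¬ G.Adj v w then fg.1 ⟨v, h⟩
            else ⟨(fg.2 ⟨G.connectedComponentMk v, by
              push_neg at h; obtain ⟨w, hw⟩ := h; exact big_of_adj hw⟩ : Fin q),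
              by omega⟩, ?_⟩
        left_inv := ?_
        right_inv := ?_ }
    · -- the inverse map lands in the subtype
      rcases fg with ⟨f, g⟩
      rw [key]
      intro v w hadj
      have hv : ¬ ∀ u, ¬ G.Adj v u := by push_neg; exact ⟨w, hadj⟩
      have hw : ¬ ∀ u, ¬ G.Adj w u := by push_neg; exact ⟨v, hadj.symm⟩
      have hcomp : G.connectedComponentMk v = G.connectedComponentMk w :=
        SimpleGraph.ConnectedComponent.connectedComponentMk_eq_of_adj hadj
      simp only [dif_neg hv, dif_neg hw]
      constructor
      · congr 1
        exact congrArg (fun c => (g c : ℕ)) (Subtype.ext hcomp)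
      · exact (g _).2
    · -- left inverse
      rintro ⟨σ, hσ⟩
      apply Subtype.ext
      funext v
      by_cases h : ∀ w, ¬ G.Adj v w
      · simp only [dif_pos h]
      · simp only [dif_neg h]
        have hreach : G.Reachable (Quot.out (G.connectedComponentMk v)) v :=
          SimpleGraph.ConnectedComponent.exact (mk_out_eq _)
        have hconst : σ (Quot.out (G.connectedComponentMk v)) = σ v :=
          constant_on_reachable σ (fun a b hab => ((key σ).mp hσ a b hab).1) hreach
        apply Fin.ext
        simp [hconst]
    · -- right inverse
      rintro ⟨f, g⟩
      refine Prod.ext ?_ ?_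
      · funext v
        simp only [dif_pos v.2]
      · funext c
        have hbig : ¬ ∀ w, ¬ G.Adj (Quot.out c.1) w := by
          push_neg
          apply adj_of_big
          rw [mk_out_eq]; exact c.2
        apply Fin.ext
        simp only [dif_neg hbig]
        exact congrArg (fun d => (g d : ℕ)) (Subtype.ext (mk_out_eq c.1))
  have hfin : ∀ n : ℕ, Nat.card (Fin n) = n := fun n => by
    simp [Nat.card_eq_fintype_card]
  rw [Nat.card_congr e, Nat.card_prod, Nat.card_fun, Nat.card_fun, hfin, hfin]
  rfl
end
end

section
/- Let G = (S,B) be a finite graph, q ≥ 1 and r ≥ 0 natural numbers, and β a real number. Then the partition function of the (q,r)-Potts model satisfies Z_β(G) := Σ_{σ : S → {1,…,q+r}} exp( β · #{ {i,j} ∈ B : σ_i = σ_j and σ_i ≤ q } ) = Σ_{X ⊆ B} (e^β − 1)^{|X|} · (q+r)^{κ₀(S,X)} · q^{κ₁(S,X)}, where κ₀(S,X) is the number of isolated vertices and κ₁(S,X) the number of connected components with at least two vertices of the graph (S,X). -/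
open Classical

noncomputable section

set_option linter.unusedSectionVars false

namespace PottsAux

variable {S : Type*} [Fintype S] [DecidableEq S]

abbrev GG (X : Finset (Sym2 S)) : SimpleGraph S := SimpleGraph.fromEdgeSet (X : Set (Sym2 S))

lemma reach_const {n q : ℕ} {X : Finset (Sym2 S)} {σ : S → Fin n}
    (hσ : ∀ e ∈ X, goodEdge q σ e) {v w : S} (h : (GG X).Reachable v w) : σ v = σ w := by
  obtain ⟨p⟩ := h
  induction p with
  | nil => rfl
  | @cons a b c hab p ih =>
    rw [SimpleGraph.fromEdgeSet_adj] at hab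
    have := hσ _ (Finset.mem_coe.mp hab.1) a (Sym2.mem_mk_left _ _) b (Sym2.mem_mk_right _ _)
    exact this.1.trans ih

lemma isolated_iff {X : Finset (Sym2 S)} (v : S) :
    (∀ w, ¬ (GG X).Adj v w) ↔
      ∀ u, (GG X).connectedComponentMk u = (GG X).connectedComponentMk v → u = v := by
  constructor
  · intro hiso u hu
    have hr : (GG X).Reachable v u := (SimpleGraph.ConnectedComponent.exact hu).symm
    obtain ⟨p⟩ := hr
    cases p with
    | nil => rfl
    | cons h p => exact absurd h (hiso _)
  · intro hsub w hadj
    have := hsub w (SimpleGraph.ConnectedComponent.sound hadj.reachable).symm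
    subst this
    exact (GG X).irrefl hadj

variable {q r : ℕ} {X : Finset (Sym2 S)}

def Pc (X : Finset (Sym2 S)) (c : (GG X).ConnectedComponent) : Prop :=
  1 < Nat.card {v : S // (GG X).connectedComponentMk v = c}

lemma Pc_of_adj {v w : S} (h : (GG X).Adj v w) : Pc X ((GG X).connectedComponentMk v) := by
  rw [Pc, Finite.one_lt_card_iff_nontrivial]
  exact ⟨⟨v, rfl⟩, ⟨w, (SimpleGraph.ConnectedComponent.sound h.reachable).symm⟩,
    by simp [h.ne]⟩

lemma lt_of_Pc {σ : S → Fin (q + r)} (hσ : ∀ e ∈ X, goodEdge q σ e) {v : S}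
    (hP : Pc X ((GG X).connectedComponentMk v)) : (σ v : ℕ) < q := by
  rw [Pc, Finite.one_lt_card_iff_nontrivial] at hP
  obtain ⟨⟨a, ha⟩, ⟨b, hb⟩, hab⟩ := hP
  have hab' : a ≠ b := fun h => hab (by simpa using h)
  have hr : (GG X).Reachable a b := SimpleGraph.ConnectedComponent.exact (ha.trans hb.symm)
  obtain ⟨p⟩ := hr
  cases p with
  | nil => exact absurd rfl hab'
  | @cons _ x _ hax p =>
    rw [SimpleGraph.fromEdgeSet_adj] at hax
    have h1 : (σ a : ℕ) < q :=
      (hσ _ (Finset.mem_coe.mp hax.1) a (Sym2.mem_mk_left _ _) a (Sym2.mem_mk_left _ _)).2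
    have h2 : σ v = σ a := reach_const hσ (SimpleGraph.ConnectedComponent.exact ha.symm)
    rwa [h2]

lemma good_iff_factor (σ : S → Fin (q + r)) (hX : ∀ e ∈ X, ¬ e.IsDiag) :
    (∀ e ∈ X, goodEdge q σ e) ↔
      ∃ f : (GG X).ConnectedComponent → Fin (q + r),
        (∀ c, Pc X c → (f c : ℕ) < q) ∧ σ = f ∘ (GG X).connectedComponentMk := by
  constructor
  · intro hσ
    refine ⟨SimpleGraph.ConnectedComponent.lift σ
      (fun v w p _ => reach_const hσ ⟨p⟩), ?_, ?_⟩
    · intro c hc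
      obtain ⟨v, rfl⟩ := c.exists_rep
      exact lt_of_Pc hσ hc
    · rfl
  · rintro ⟨f, hf, rfl⟩
    intro e he
    induction e with
    | _ v w =>
      have hvw : v ≠ w := fun h => hX _ he (by simp [h])
      have hadj : (GG X).Adj v w := by
        rw [SimpleGraph.fromEdgeSet_adj]; exact ⟨Finset.mem_coe.mpr he, hvw⟩
      have hmk : (GG X).connectedComponentMk v = (GG X).connectedComponentMk w :=
        SimpleGraph.ConnectedComponent.sound hadj.reachable
      have hPv : Pc X ((GG X).connectedComponentMk v) := Pc_of_adj hadj
      intro i hi j hj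
      rw [Sym2.mem_iff] at hi hj
      have hvali : (f ∘ (GG X).connectedComponentMk) i
          = (f ∘ (GG X).connectedComponentMk) v := by
        rcases hi with rfl | rfl
        · rfl
        · simp only [Function.comp_apply, hmk]
      have hvalj : (f ∘ (GG X).connectedComponentMk) j
          = (f ∘ (GG X).connectedComponentMk) v := by
        rcases hj with rfl | rfl
        · rfl
        · simp only [Function.comp_apply, hmk]
      refine ⟨hvali.trans hvalj.symm, ?_⟩
      rw [hvali]
      exact hf _ hPv


-- card of constrained fiber
lemma card_lt_subtype : Fintype.card {x : Fin (q + r) // (x : ℕ) < q} = q := by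
  have e : {x : Fin (q + r) // (x : ℕ) < q} ≃ Fin q :=
    { toFun := fun x => ⟨x.1, x.2⟩
      invFun := fun y => ⟨⟨y.1, y.2.trans_le (Nat.le_add_right q r)⟩, y.2⟩
      left_inv := fun x => rfl
      right_inv := fun y => rfl }
  rw [Fintype.card_congr e, Fintype.card_fin]

lemma kappa1_eq : kappa1 X = Nat.card {c : (GG X).ConnectedComponent // Pc X c} := rfl

lemma not_Pc_mk {v : S} (hv : ∀ w, ¬ (GG X).Adj v w) :
    ¬ Pc X ((GG X).connectedComponentMk v) := by
  rw [Pc, Finite.one_lt_card_iff_nontrivial, not_nontrivial_iff_subsingleton]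
  exact ⟨fun a b => Subtype.ext
    (((isolated_iff v).mp hv a.1 a.2).trans ((isolated_iff v).mp hv b.1 b.2).symm)⟩

lemma kappa0_eq : kappa0 X = Nat.card {c : (GG X).ConnectedComponent // ¬ Pc X c} := by
  apply Nat.card_eq_of_bijective (fun v : {v : S // ∀ w, ¬ (GG X).Adj v w} =>
    (⟨(GG X).connectedComponentMk v.1, not_Pc_mk v.2⟩ : {c : (GG X).ConnectedComponent // ¬ Pc X c}))
  constructor
  · rintro ⟨v, hv⟩ ⟨v', hv'⟩ h
    have hmk : (GG X).connectedComponentMk v = (GG X).connectedComponentMk v' :=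
      congrArg Subtype.val h
    exact Subtype.ext ((isolated_iff v').mp hv' v hmk)
  · rintro ⟨c, hc⟩
    obtain ⟨v, rfl⟩ := c.exists_rep
    have hsub : Subsingleton {u : S // (GG X).connectedComponentMk u
        = (GG X).connectedComponentMk v} := by
      have hc : ¬ 1 < Nat.card {u : S // (GG X).connectedComponentMk u
          = (GG X).connectedComponentMk v} := hc
      rw [Finite.one_lt_card_iff_nontrivial, not_nontrivial_iff_subsingleton] at hc
      exact hc
    refine ⟨⟨v, (isolated_iff v).mpr fun u hu => ?_⟩, rfl⟩
    exact congrArg Subtype.val (hsub.elim ⟨u, hu⟩ ⟨v, rfl⟩)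

lemma card_good (hX : ∀ e ∈ X, ¬ e.IsDiag) :
    Nat.card {σ : S → Fin (q + r) // ∀ e ∈ X, goodEdge q σ e}
      = (q + r) ^ kappa0 X * q ^ kappa1 X := by
  have hbij : Nat.card {f : (GG X).ConnectedComponent → Fin (q + r) //
      ∀ c, Pc X c → (f c : ℕ) < q}
      = Nat.card {σ : S → Fin (q + r) // ∀ e ∈ X, goodEdge q σ e} := by
    apply Nat.card_eq_of_bijective
      (fun f => ⟨f.1 ∘ (GG X).connectedComponentMk,
        (good_iff_factor _ hX).mpr ⟨f.1, f.2, rfl⟩⟩)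
    constructor
    · rintro ⟨f, hf⟩ ⟨f', hf'⟩ h
      have h' := congrArg Subtype.val h
      refine Subtype.ext (funext fun c => ?_)
      obtain ⟨v, rfl⟩ := c.exists_rep
      exact congrFun h' v
    · rintro ⟨σ, hσ⟩
      obtain ⟨f, hf, hfs⟩ := (good_iff_factor σ hX).mp hσ
      exact ⟨⟨f, hf⟩, Subtype.ext hfs.symm⟩
  rw [← hbij]
  haveI : Fintype (GG X).ConnectedComponent := Fintype.ofFinite _
  rw [Nat.card_eq_fintype_card, Fintype.card_congr (@Equiv.subtypePiEquivPi _ (fun _ => Fin (q + r)) (fun c x => Pc X c → (x : ℕ) < q)), Fintype.card_pi]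
  have hfib : ∀ c : (GG X).ConnectedComponent,
      Fintype.card {x : Fin (q + r) // Pc X c → (x : ℕ) < q}
        = if Pc X c then q else q + r := by
    intro c
    by_cases h : Pc X c
    · rw [if_pos h,
        Fintype.card_congr (Equiv.subtypeEquivRight (fun x : Fin (q + r) =>
          (by simp [h] : (Pc X c → (x : ℕ) < q) ↔ (x : ℕ) < q)))]
      exact card_lt_subtype
    · rw [if_neg h, Fintype.card_congr (Equiv.subtypeUnivEquiv fun x hp => absurd hp h),
        Fintype.card_fin]
  rw [Finset.prod_congr rfl (fun c _ => hfib c), Finset.prod_ite, Finset.prod_const,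
    Finset.prod_const]
  rw [kappa0_eq, kappa1_eq, Nat.card_eq_fintype_card, Nat.card_eq_fintype_card,
    Fintype.card_subtype, Fintype.card_subtype]
  ring

end PottsAux

open PottsAux in
/-- The partition function of the `(q,r)`-Potts model on the finite graph `(S, B)` equals
`Σ_{X ⊆ B} (e^β − 1)^{|X|} (q+r)^{κ₀(S,X)} q^{κ₁(S,X)}`. -/
theorem statement1 {S : Type*} [Fintype S] [DecidableEq S] (q r : ℕ) (hq : 1 ≤ q)
    (B : Finset (Sym2 S)) (hB : ∀ e ∈ B, ¬ e.IsDiag) (β : ℝ) :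
    ∑ σ : S → Fin (q + r), Real.exp (β * (B.filter (goodEdge q σ)).card)
      = ∑ X ∈ B.powerset,
          (Real.exp β - 1) ^ X.card * (q + r : ℝ) ^ kappa0 X * (q : ℝ) ^ kappa1 X := by
  have step1 : ∀ σ : S → Fin (q + r),
      Real.exp (β * (B.filter (goodEdge q σ)).card)
        = ∑ X ∈ B.powerset, (if (∀ e ∈ X, goodEdge q σ e)
            then (Real.exp β - 1) ^ X.card else 0) := by
    intro σ
    have h1 : Real.exp (β * (B.filter (goodEdge q σ)).card)
        = ∏ e ∈ B, ((if goodEdge q σ e then Real.exp β - 1 else 0) + 1) := by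
      have : ∀ e ∈ B, ((if goodEdge q σ e then Real.exp β - 1 else 0) + 1)
          = (if goodEdge q σ e then Real.exp β else 1) := by
        intro e _; split_ifs <;> ring
      rw [Finset.prod_congr rfl this, ← Finset.prod_filter,
        Finset.prod_const, mul_comm β, Real.exp_nat_mul]
    rw [h1, Finset.prod_add]
    refine Finset.sum_congr rfl fun X hX => ?_
    have h2 : ∏ e ∈ B \ X, (1 : ℝ) = 1 := Finset.prod_const_one
    rw [h2, mul_one]
    by_cases h : ∀ e ∈ X, goodEdge q σ e
    · rw [if_pos h, Finset.prod_congr rfl (fun e he => if_pos (h e he)),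
        Finset.prod_const]
    · push_neg at h
      obtain ⟨e, he, hbad⟩ := h
      rw [if_neg (by push_neg; exact ⟨e, he, hbad⟩)]
      exact Finset.prod_eq_zero he (if_neg hbad)
  simp_rw [step1]
  rw [Finset.sum_comm]
  refine Finset.sum_congr rfl fun X hX => ?_
  have hXB : X ⊆ B := Finset.mem_powerset.mp hX
  have hXd : ∀ e ∈ X, ¬ e.IsDiag := fun e he => hB e (hXB he)
  rw [← Finset.sum_filter, Finset.sum_const, nsmul_eq_mul]
  have hcard : (Finset.univ.filter (fun σ : S → Fin (q + r) => ∀ e ∈ X, goodEdge q σ e)).card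
      = (q + r) ^ kappa0 X * q ^ kappa1 X := by
    rw [← Fintype.card_subtype, ← Nat.card_eq_fintype_card]
    exact card_good hXd
  rw [hcard]
  push_cast
  ring
end
end

section
/- Let G = (S,B) be a finite graph, q ≥ 1 and r ≥ 0 natural numbers, and β ≥ 0. For every coloring σ : S → {1,…,q+r}, the marginal of the Edwards–Sokal weight on the spin configuration recovers the (q,r)-Potts Boltzmann weight: Σ_{X ⊆ B} π(σ,X) = exp( β · #{ {i,j} ∈ B : σ_i = σ_j and σ_i ≤ q } ), where π(σ,X) = e^{β|B|} ∏_{{i,j}∈B}[1({i,j}∈X)·1(σ_i = σ_j and σ_i ≤ q)·(1−e^{−β}) + 1({i,j}∉X)·e^{−β}]. -/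
open Classical

noncomputable section

/-- The Edwards–Sokal weight
`π(σ,X) = e^{β|B|} ∏_{e∈B} [1(e∈X)·1(e good for σ)·(1−e^{−β}) + 1(e∉X)·e^{−β}]`. -/
def esWeight {S : Type*} {n : ℕ} (q : ℕ) (β : ℝ) (B : Finset (Sym2 S))
    (σ : S → Fin n) (X : Finset (Sym2 S)) : ℝ :=
  Real.exp (β * B.card) *
    ∏ e ∈ B,
      ((if e ∈ X then (1 : ℝ) else 0) * (if goodEdge q σ e then (1 : ℝ) else 0)
          * (1 - Real.exp (-β))
        + (if e ∉ X then (1 : ℝ) else 0) * Real.exp (-β))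

/-- Summing the Edwards–Sokal weight over all bond subsets `X ⊆ B` recovers the
`(q,r)`-Potts Boltzmann weight of the colouring `σ`. -/
theorem statement4 {S : Type*} [Fintype S] [DecidableEq S] (q r : ℕ) (hq : 1 ≤ q)
    (B : Finset (Sym2 S)) (β : ℝ) (hβ : 0 ≤ β) (σ : S → Fin (q + r)) :
    ∑ X ∈ B.powerset, esWeight q β B σ X
      = Real.exp (β * (B.filter (goodEdge q σ)).card) := by
  classical
  set f : Sym2 S → ℝ := fun e =>
    (if goodEdge q σ e then (1 : ℝ) else 0) * (1 - Real.exp (-β)) with hf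
  set g : Sym2 S → ℝ := fun e => Real.exp (-β) with hg
  have key : ∀ X ∈ B.powerset,
      esWeight q β B σ X
        = Real.exp (β * B.card) * ((∏ e ∈ X, f e) * ∏ e ∈ B \ X, g e) := by
    intro X hX
    rw [Finset.mem_powerset] at hX
    unfold esWeight
    congr 1
    refine Eq.trans (Finset.prod_congr rfl
      (g := fun e => if e ∈ X then f e else g e) fun e he => ?_) ?_
    · by_cases h : e ∈ X <;> simp [h, hf, hg]
    rw [← Finset.prod_sdiff hX]
    rw [Finset.prod_congr rfl (fun e he => if_neg (Finset.mem_sdiff.mp he).2),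
        Finset.prod_congr (rfl : X = X) (fun e he => if_pos he)]
    ring
  rw [Finset.sum_congr rfl key, ← Finset.mul_sum, ← Finset.prod_add]
  have h2 : ∀ e ∈ B, f e + g e = if goodEdge q σ e then 1 else Real.exp (-β) := by
    intro e _
    by_cases h : goodEdge q σ e <;> simp [hf, hg, h]
  rw [Finset.prod_congr rfl h2]
  have hcard : Real.exp (β * B.card) = ∏ _e ∈ B, Real.exp β := by
    rw [Finset.prod_const, ← Real.exp_nat_mul, mul_comm]
  rw [hcard, ← Finset.prod_mul_distrib]
  have h3 : ∀ e ∈ B, Real.exp β * (if goodEdge q σ e then 1 else Real.exp (-β))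
      = if goodEdge q σ e then Real.exp β else 1 := by
    intro e _
    by_cases h : goodEdge q σ e <;>
      simp [h, ← Real.exp_add]
  rw [Finset.prod_congr rfl h3, ← Finset.prod_filter, Finset.prod_const,
      ← Real.exp_nat_mul, mul_comm]
end
end

section
/- Let G = (S,B) be a finite graph, q ≥ 1 and r ≥ 0 natural numbers, β ≥ 0, and p_β = 1 − e^{−β}. For every bond subset X ⊆ B, the marginal of the Edwards–Sokal weight on the bond configuration is proportional to the r-biased random-cluster weight: Σ_{σ : S → {1,…,q+r}} π(σ,X) = e^{β|B|} · p_β^{|X|} (1 − p_β)^{|B| − |X|} · (q+r)^{κ₀(S,X)} · q^{κ₁(S,X)}, where κ₀(S,X) is the number of isolated vertices and κ₁(S,X) the number of connected components with at least two vertices of (S,X). -/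
open Classical

noncomputable section

section Aux

variable {S : Type*} [Fintype S] [DecidableEq S] {q r : ℕ} (X : Finset (Sym2 S))

local notation "G" => SimpleGraph.fromEdgeSet (X : Set (Sym2 S))

abbrev Iso (v : S) : Prop := ∀ w, ¬ (G).Adj v w

abbrev Big (c : (G).ConnectedComponent) : Prop :=
  1 < Nat.card {v : S // (G).connectedComponentMk v = c}

variable {X}

lemma iso_reach {v w : S} (h : Iso X v) (hr : (G).Reachable v w) : w = v := by
  obtain ⟨p⟩ := hr
  cases p with
  | nil => rfl
  | cons ha _ => exact absurd ha (h _)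

lemma big_mk_iff {v : S} : Big X ((G).connectedComponentMk v) ↔ ¬ Iso X v := by
  constructor
  · intro hb hiso
    obtain ⟨⟨a, ha⟩, ⟨b, hb'⟩, hne⟩ := Finite.one_lt_card_iff_nontrivial.mp hb
    have ha' : a = v := iso_reach hiso ((SimpleGraph.ConnectedComponent.exact ha).symm)
    have hb'' : b = v := iso_reach hiso ((SimpleGraph.ConnectedComponent.exact hb').symm)
    exact hne (by simp [ha', hb''])
  · intro hiso
    rw [not_forall] at hiso
    obtain ⟨w, hw⟩ := hiso
    rw [not_not] at hw
    refine Finite.one_lt_card_iff_nontrivial.mpr ?_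
    refine ⟨⟨v, rfl⟩, ⟨w, (SimpleGraph.ConnectedComponent.connectedComponentMk_eq_of_adj hw).symm⟩, ?_⟩
    simp only [ne_eq, Subtype.mk.injEq]
    exact hw.ne

end Aux

section Aux2

variable {S : Type*} [Fintype S] [DecidableEq S] {q r : ℕ} {X : Finset (Sym2 S)}

local notation "G" => SimpleGraph.fromEdgeSet (X : Set (Sym2 S))

/-- Components that are not big correspond to isolated vertices. -/
def notBigEquivIso : {c : (G).ConnectedComponent // ¬ Big X c} ≃ {v : S // Iso X v} where
  toFun c := ⟨c.1.out, by
    have h := c.2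
    rw [← Quot.out_eq c.1] at h
    exact not_not.mp (fun hiso => h (big_mk_iff.mpr hiso))⟩
  invFun v := ⟨(G).connectedComponentMk v.1, fun hb => (big_mk_iff.mp hb) v.2⟩
  left_inv c := Subtype.ext (Quot.out_eq c.1)
  right_inv v := Subtype.ext (by
    have : (G).connectedComponentMk ((G).connectedComponentMk v.1).out
        = (G).connectedComponentMk v.1 := Quot.out_eq _
    exact iso_reach v.2 (SimpleGraph.ConnectedComponent.exact this).symm)

lemma walk_const {n : ℕ} {σ : S → Fin n}
    (hσ : ∀ a b : S, (G).Adj a b → σ a = σ b ∧ (σ a : ℕ) < q)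
    {v w : S} (p : (G).Walk v w) : σ v = σ w := by
  induction p with
  | nil => rfl
  | cons ha _ ih => exact ((hσ _ _ ha).1).trans ih

/-- Colourings monochromatic-visible along edges correspond to colourings of components
that are visible on big components. -/
def goodEquiv :
    {σ : S → Fin (q + r) // ∀ a b : S, (G).Adj a b → σ a = σ b ∧ (σ a : ℕ) < q}
      ≃ {f : (G).ConnectedComponent → Fin (q + r) // ∀ c, Big X c → (f c : ℕ) < q} where
  toFun σ := ⟨SimpleGraph.ConnectedComponent.lift σ.1 (fun _ _ p _ => walk_const σ.2 p), by
    refine SimpleGraph.ConnectedComponent.ind (fun v hb => ?_)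
    rw [SimpleGraph.ConnectedComponent.lift_mk]
    obtain ⟨w, hw⟩ := not_forall.mp (big_mk_iff.mp hb)
    exact (σ.2 v w (not_not.mp hw)).2⟩
  invFun f := ⟨fun v => f.1 ((G).connectedComponentMk v), fun a b hab =>
    ⟨by show f.1 ((G).connectedComponentMk a) = f.1 ((G).connectedComponentMk b)
        rw [SimpleGraph.ConnectedComponent.connectedComponentMk_eq_of_adj hab],
      f.2 _ (big_mk_iff.mpr (fun hiso => hiso b hab))⟩⟩
  left_inv σ := by
    apply Subtype.ext
    funext v
    rfl
  right_inv f := by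
    apply Subtype.ext
    funext c
    induction c using Quot.ind with
    | _ v => rfl

lemma good_iff (hX : ∀ e ∈ X, ¬ e.IsDiag) (σ : S → Fin (q + r)) :
    (∀ e ∈ X, goodEdge q σ e)
      ↔ ∀ a b : S, (G).Adj a b → σ a = σ b ∧ (σ a : ℕ) < q := by
  constructor
  · intro h a b hab
    rw [SimpleGraph.fromEdgeSet_adj] at hab
    exact h _ hab.1 a (Sym2.mem_mk_left a b) b (Sym2.mem_mk_right a b)
  · intro h e he
    induction e with
    | _ a b =>
      have hne : a ≠ b := by
        intro hab; exact hX _ he (by simp [hab])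
      have hadj : (G).Adj a b := (SimpleGraph.fromEdgeSet_adj _).mpr ⟨he, hne⟩
      have h1 := h a b hadj
      have h2 := h b a hadj.symm
      intro i hi j hj
      rw [Sym2.mem_iff] at hi hj
      rcases hi with rfl | rfl <;> rcases hj with rfl | rfl
      · exact ⟨rfl, h1.2⟩
      · exact h1
      · exact ⟨h1.1.symm, h2.2⟩
      · exact ⟨rfl, h2.2⟩

lemma card_good (hX : ∀ e ∈ X, ¬ e.IsDiag) :
    Nat.card {σ : S → Fin (q + r) // ∀ e ∈ X, goodEdge q σ e}
      = (q + r) ^ kappa0 X * q ^ kappa1 X := by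
  haveI : Fintype (G).ConnectedComponent := Fintype.ofFinite _
  rw [Nat.card_congr ((Equiv.subtypeEquivRight (good_iff hX)).trans
    (goodEquiv.trans (Equiv.subtypePiEquivPi (p := fun (c : (G).ConnectedComponent) (x : Fin (q+r)) => Big X c → (x:ℕ) < q)))), Nat.card_pi]
  have hcard : ∀ c : (G).ConnectedComponent,
      Nat.card {x : Fin (q + r) // Big X c → (x : ℕ) < q}
        = if Big X c then q else q + r := by
    intro c
    by_cases hb : Big X c
    · rw [if_pos hb]
      have e : {x : Fin (q + r) // Big X c → (x : ℕ) < q} ≃ Fin q :=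
        { toFun := fun x => ⟨x.1, x.2 hb⟩
          invFun := fun y => ⟨⟨y.1, lt_of_lt_of_le y.2 (Nat.le_add_right q r)⟩, fun _ => y.2⟩
          left_inv := fun x => Subtype.ext rfl
          right_inv := fun y => rfl }
      rw [Nat.card_congr e, Nat.card_eq_fintype_card, Fintype.card_fin]
    · rw [if_neg hb]
      rw [Nat.card_congr (Equiv.subtypeUnivEquiv (fun x h => absurd h hb)),
        Nat.card_eq_fintype_card, Fintype.card_fin]
  rw [Finset.prod_congr rfl (fun c _ => hcard c), Finset.prod_ite, Finset.prod_const,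
    Finset.prod_const]
  have h1 : (Finset.univ.filter (fun c => Big X c)).card = kappa1 X := by
    rw [kappa1, Nat.card_eq_fintype_card, Fintype.card_subtype]
  have h0 : (Finset.univ.filter (fun c => ¬ Big X c)).card = kappa0 X := by
    rw [kappa0, ← Nat.card_congr (notBigEquivIso (X := X)), Nat.card_eq_fintype_card,
      Fintype.card_subtype]
  rw [h1, h0]
  ring

end Aux2

/-- Summing the Edwards–Sokal weight over all colourings yields, up to the factor
`e^{β|B|}`, the `r`-biased random-cluster weight of the bond configuration `X`
(with `p_β = 1 − e^{−β}`). -/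
theorem statement5 {S : Type*} [Fintype S] [DecidableEq S] (q r : ℕ) (hq : 1 ≤ q)
    (B : Finset (Sym2 S)) (hB : ∀ e ∈ B, ¬ e.IsDiag) (β : ℝ) (hβ : 0 ≤ β)
    (X : Finset (Sym2 S)) (hXB : X ⊆ B) :
    ∑ σ : S → Fin (q + r), esWeight q β B σ X
      = Real.exp (β * B.card)
          * (1 - Real.exp (-β)) ^ X.card
          * (1 - (1 - Real.exp (-β))) ^ (B.card - X.card)
          * (q + r : ℝ) ^ kappa0 X * (q : ℝ) ^ kappa1 X := by
  have hterm : ∀ σ : S → Fin (q + r), esWeight q β B σ X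
      = (if (∀ e ∈ X, goodEdge q σ e) then (1 : ℝ) else 0)
          * (Real.exp (β * B.card) * (1 - Real.exp (-β)) ^ X.card
            * Real.exp (-β) ^ (B.card - X.card)) := by
    intro σ
    unfold esWeight
    trans (Real.exp (β * B.card) * ∏ e ∈ B,
      ((if e ∈ X then (1 : ℝ) else 0) * (if goodEdge q σ e then (1 : ℝ) else 0)
          * (1 - Real.exp (-β)) + (if e ∉ X then (1 : ℝ) else 0) * Real.exp (-β)))
    · congr!
    rw [← Finset.prod_sdiff hXB]
    have h1 : ∀ e ∈ B \ X,
        ((if e ∈ X then (1 : ℝ) else 0) * (if goodEdge q σ e then (1 : ℝ) else 0)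
            * (1 - Real.exp (-β)) + (if e ∉ X then (1 : ℝ) else 0) * Real.exp (-β))
          = Real.exp (-β) := by
      intro e he
      rw [Finset.mem_sdiff] at he
      simp [he.2]
    have h2 : ∀ e ∈ X,
        ((if e ∈ X then (1 : ℝ) else 0) * (if goodEdge q σ e then (1 : ℝ) else 0)
            * (1 - Real.exp (-β)) + (if e ∉ X then (1 : ℝ) else 0) * Real.exp (-β))
          = (if goodEdge q σ e then (1 : ℝ) else 0) * (1 - Real.exp (-β)) := by
      intro e he
      simp [he]
    rw [Finset.prod_congr rfl h1, Finset.prod_congr rfl h2, Finset.prod_const,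
      Finset.prod_mul_distrib, Finset.prod_const, Finset.prod_boole,
      Finset.card_sdiff_of_subset hXB]
    ring
  rw [Finset.sum_congr rfl (fun σ _ => hterm σ), ← Finset.sum_mul, Finset.sum_boole]
  have hcard : (Finset.univ.filter
        (fun σ : S → Fin (q + r) => ∀ e ∈ X, goodEdge q σ e)).card
      = (q + r) ^ kappa0 X * q ^ kappa1 X := by
    rw [← card_good (fun e he => hB e (hXB he)), Nat.card_eq_fintype_card,
      Fintype.card_subtype]
  rw [hcard]
  push_cast
  ring
end
end
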